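/- Let α < 0, 1 ≤ p ≤ ∞. For ℓ ∈ Z^d define ∨_ℓ = {k ∈ Z^d : supp η_k^α ∩ supp η_ℓ ≠ ∅}, where {η_ℓ} is a standard uniform (modulation-space) partition with supp η_ℓ ⊆ ℓ + [−1,1]^d and {η_k^α} is an α-BAPU with supp η_k^α ⊆ B(⟨k⟩^{α/(1−α)}k, C⟨k⟩^{α/(1−α)}). Then #∨_ℓ ≤ C_d ⟨ℓ⟩^{−αd}. -/

import Mathlib

noncomputable def jbracket {d : ℕ} (x : EuclideanSpace ℝ (Fin d)) : ℝ :=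
  Real.sqrt (1 + ‖x‖ ^ 2)

noncomputable def latt {d : ℕ} (k : Fin d → ℤ) : EuclideanSpace ℝ (Fin d) :=
  (EuclideanSpace.equiv (Fin d) ℝ).symm (fun i => (k i : ℝ))

/-
Write `β = α / (1 - α) ∈ (-1, 0)`. If the ball around `⟨k⟩^β k` meets the unit cube at `ℓ`, then
`‖⟨k⟩^β k - ℓ‖ ≤ |C| + √d =: R`, and `⟨k⟩^{1+β} ≤ (2 + R) ⟨ℓ⟩` gives `⟨k⟩^β ≥ ((2 + R) ⟨ℓ⟩)^α`.
The map `x ↦ ⟨x⟩^β x` expands distances: `‖⟨x⟩^β x - ⟨y⟩^β y‖ ≥ (1 + β) ⟨x⟩^β ‖x - y‖` when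
`‖y‖ ≤ ‖x‖` (a one-variable monotonicity estimate for the radial part, Cauchy–Schwarz for the
angular part). Hence all such `k` lie within `≲ ⟨ℓ⟩^{-α}` of each other, and a lattice cube of that
side contains `≲ ⟨ℓ⟩^{-αd}` points.
-/

open Real Set
open scoped RealInnerProductSpace

lemma one_add_mul_rpow_mul_sub_le {β a b : ℝ} (hβ₁ : -1 ≤ β) (hβ₀ : β ≤ 0) (hb : 0 ≤ b)
    (hab : b ≤ a) :
    (1 + β) * (1 + a ^ 2) ^ (β / 2) * (a - b) ≤
      a * (1 + a ^ 2) ^ (β / 2) - b * (1 + b ^ 2) ^ (β / 2) := by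
  set m := (1 + β) * (1 + a ^ 2) ^ (β / 2)
  let g : ℝ → ℝ := fun t => t * (1 + t ^ 2) ^ (β / 2) - m * t
  have hsplit : ∀ t : ℝ, (1 + t ^ 2) ^ (β / 2) = (1 + t ^ 2) * (1 + t ^ 2) ^ (β / 2 - 1) :=
    fun t => by
      conv_lhs => rw [show β / 2 = 1 + (β / 2 - 1) by ring, rpow_add (by positivity), rpow_one]
  have hg : ∀ t, HasDerivAt g ((1 + (1 + β) * t ^ 2) * (1 + t ^ 2) ^ (β / 2 - 1) - m) t := by
    intro t
    refine (((hasDerivAt_id t).mul (((hasDerivAt_pow 2 t).const_add 1).rpow_const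
      (p := β / 2) (Or.inl (by positivity)))).sub
        ((hasDerivAt_id t).const_mul m)).congr_deriv ?_
    rw [hsplit t]; simp only [id, Nat.cast_ofNat]; ring
  have hmono : MonotoneOn g (Icc b a) := by
    refine monotoneOn_of_deriv_nonneg (convex_Icc b a)
      (fun t _ => (hg t).continuousAt.continuousWithinAt)
      (fun t _ => (hg t).differentiableAt.differentiableWithinAt) fun t ht => ?_
    rw [interior_Icc] at ht
    have hpos : 0 < 1 + t ^ 2 := by positivity
    have hweight : (1 + a ^ 2) ^ (β / 2) ≤ (1 + t ^ 2) ^ (β / 2) :=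
      rpow_le_rpow_of_nonpos hpos (by nlinarith [ht.1, ht.2]) (by linarith)
    calc 0 ≤ (1 + β) * ((1 + t ^ 2) ^ (β / 2) - (1 + a ^ 2) ^ (β / 2))
          - β * (1 + t ^ 2) ^ (β / 2 - 1) :=
          sub_nonneg_of_le ((mul_nonpos_of_nonpos_of_nonneg hβ₀ (by positivity)).trans
            (mul_nonneg (by linarith) (by linarith)))
      _ = _ := by rw [(hg t).deriv, hsplit t]; ring
  have := hmono (left_mem_Icc.2 hab) (right_mem_Icc.2 hab) hab
  simp only [g] at this
  linarith

lemma one_add_mul_rpow_mul_norm_sub_le {E : Type*} [NormedAddCommGroup E]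
    [InnerProductSpace ℝ E] {β : ℝ} (hβ₁ : -1 ≤ β) (hβ₀ : β ≤ 0) {x y : E} (h : ‖y‖ ≤ ‖x‖) :
    (1 + β) * (1 + ‖x‖ ^ 2) ^ (β / 2) * ‖x - y‖ ≤
      ‖(1 + ‖x‖ ^ 2) ^ (β / 2) • x - (1 + ‖y‖ ^ 2) ^ (β / 2) • y‖ := by
  set a := ‖x‖
  set b := ‖y‖
  set φa := (1 + a ^ 2) ^ (β / 2)
  set φb := (1 + b ^ 2) ^ (β / 2)
  have hφa : 0 < φa := by positivity
  have hφab : φa ≤ φb :=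
    rpow_le_rpow_of_nonpos (by positivity) (by nlinarith [norm_nonneg y]) (by linarith)
  have hradial : (1 + β) * φa * (a - b) ≤ a * φa - b * φb :=
    one_add_mul_rpow_mul_sub_le hβ₁ hβ₀ (norm_nonneg y) h
  have hcs : ⟪x, y⟫ ≤ a * b := real_inner_le_norm x y
  -- a radial and an angular term, each nonnegative
  have hinner : (1 + β) * φa * ‖x - y‖ ^ 2 ≤ ⟪φa • x - φb • y, x - y⟫ := by
    have hexpand : ⟪φa • x - φb • y, x - y⟫ - (1 + β) * φa * ‖x - y‖ ^ 2 =
        (a - b) * ((a * φa - b * φb) - (1 + β) * φa * (a - b)) +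
          (a * b - ⟪x, y⟫) * (φb - (1 + 2 * β) * φa) := by
      simp only [norm_sub_sq_real, inner_sub_left, inner_sub_right, real_inner_smul_left,
        real_inner_self_eq_norm_sq, real_inner_comm y x]
      ring
    have := add_nonneg (mul_nonneg (sub_nonneg.2 h) (sub_nonneg.2 hradial))
      (mul_nonneg (sub_nonneg.2 hcs) (by nlinarith : 0 ≤ φb - (1 + 2 * β) * φa))
    linarith
  rcases (norm_nonneg (x - y)).eq_or_lt with h0 | h0
  · rw [← h0, mul_zero]; exact norm_nonneg _
  · refine le_of_mul_le_mul_right ?_ h0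
    calc (1 + β) * φa * ‖x - y‖ * ‖x - y‖ = (1 + β) * φa * ‖x - y‖ ^ 2 := by ring
      _ ≤ _ := hinner.trans (real_inner_le_norm _ _)

lemma EuclideanSpace.norm_le_sqrt_card_mul {ι : Type*} [Fintype ι] {x : EuclideanSpace ℝ ι}
    {r : ℝ} (hr : 0 ≤ r) (hx : ∀ i, |x i| ≤ r) : ‖x‖ ≤ √(Fintype.card ι) * r := by
  rw [EuclideanSpace.norm_eq, ← sqrt_sq hr, ← sqrt_mul (Nat.cast_nonneg _)]
  refine sqrt_le_sqrt ?_
  calc ∑ i, ‖x i‖ ^ 2 ≤ ∑ _i : ι, r ^ 2 := Finset.sum_le_sum fun i _ => by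
        rw [norm_eq_abs]; exact pow_le_pow_left₀ (abs_nonneg _) (hx i) 2
    _ = Fintype.card ι * r ^ 2 := by simp

lemma finite_and_ncard_le_of_abs_sub_le {ι : Type*} [Fintype ι] [DecidableEq ι]
    {S : Set (ι → ℤ)} {T : ℝ} (hT : 0 ≤ T)
    (hS : ∀ k ∈ S, ∀ k' ∈ S, ∀ i, |(k i : ℝ) - k' i| ≤ T) :
    S.Finite ∧ (S.ncard : ℝ) ≤ (2 * T + 1) ^ Fintype.card ι := by
  rcases S.eq_empty_or_nonempty with rfl | ⟨k₀, hk₀⟩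
  · simpa using pow_nonneg (by linarith) _
  set N := ⌊T⌋
  have hN : 0 ≤ N := Int.floor_nonneg.2 hT
  have hsub : S ⊆ ↑(Finset.Icc (k₀ - fun _ => N) (k₀ + fun _ => N)) := fun k hk => by
    have hdiff : ∀ i, |k i - k₀ i| ≤ N := fun i =>
      Int.le_floor.2 (by simpa using hS k hk k₀ hk₀ i)
    simp only [Finset.coe_Icc, mem_Icc, Pi.le_def, Pi.sub_apply, Pi.add_apply]
    exact ⟨fun i => by linarith [neg_abs_le (k i - k₀ i), hdiff i],
      fun i => by linarith [le_abs_self (k i - k₀ i), hdiff i]⟩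
  refine ⟨(Finset.finite_toSet _).subset hsub, ?_⟩
  calc (S.ncard : ℝ) ≤ (Finset.Icc (k₀ - fun _ => N) (k₀ + fun _ => N)).card := by
        exact_mod_cast
          (Set.ncard_le_ncard hsub (Finset.finite_toSet _)).trans_eq (ncard_coe_finset _)
    _ = ((2 * N + 1).toNat : ℝ) ^ Fintype.card ι := by
        simp only [Pi.card_Icc, Pi.sub_apply, Pi.add_apply, Int.card_Icc,
          show ∀ a : ℤ, a + N + 1 - (a - N) = 2 * N + 1 from fun a => by ring,
          Finset.prod_const, Finset.card_univ, Nat.cast_pow]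
    _ = (2 * N + 1 : ℝ) ^ Fintype.card ι := by
        rw [← Int.cast_natCast, Int.toNat_of_nonneg (by omega)]
        push_cast; ring
    _ ≤ (2 * T + 1) ^ Fintype.card ι := by
        gcongr
        exact Int.floor_le T

variable {d : ℕ}

lemma one_le_jbracket (x : EuclideanSpace ℝ (Fin d)) : 1 ≤ jbracket x :=
  one_le_sqrt.2 (le_add_of_nonneg_right (sq_nonneg _))

lemma jbracket_pos (x : EuclideanSpace ℝ (Fin d)) : 0 < jbracket x :=
  zero_lt_one.trans_le (one_le_jbracket x)

lemma norm_le_jbracket (x : EuclideanSpace ℝ (Fin d)) : ‖x‖ ≤ jbracket x :=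
  (le_sqrt (norm_nonneg x) (by positivity)).2 (le_add_of_nonneg_left zero_le_one)

lemma jbracket_le_one_add_norm (x : EuclideanSpace ℝ (Fin d)) : jbracket x ≤ 1 + ‖x‖ :=
  (sqrt_le_left (by positivity)).2 (by nlinarith [norm_nonneg x])

lemma jbracket_rpow (x : EuclideanSpace ℝ (Fin d)) (β : ℝ) :
    jbracket x ^ β = (1 + ‖x‖ ^ 2) ^ (β / 2) := by
  rw [jbracket, sqrt_eq_rpow, ← rpow_mul (by positivity), one_div_mul_eq_div]

lemma latt_apply (k : Fin d → ℤ) (i : Fin d) : latt k i = k i := rfl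

lemma abs_sub_le_norm_latt_sub (k k' : Fin d → ℤ) (i : Fin d) :
    |(k i : ℝ) - k' i| ≤ ‖latt k - latt k'‖ := by
  simpa [latt_apply] using PiLp.norm_apply_le (latt k - latt k') i

lemma norm_center_sub_le {β C : ℝ} (hβ : β ≤ 0) {x z ξ : EuclideanSpace ℝ (Fin d)}
    (hξx : ξ ∈ Metric.ball (jbracket x ^ β • x) (C * jbracket x ^ β))
    (hξz : ∀ i, |ξ i - z i| ≤ 1) :
    ‖jbracket x ^ β • x - z‖ ≤ |C| + √d := by
  have hw : jbracket x ^ β ≤ 1 := rpow_le_one_of_one_le_of_nonpos (one_le_jbracket x) hβ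
  have hball : ‖jbracket x ^ β • x - ξ‖ ≤ |C| := by
    rw [← dist_eq_norm, dist_comm]
    calc dist ξ _ ≤ C * jbracket x ^ β := (Metric.mem_ball.1 hξx).le
      _ ≤ |C| * jbracket x ^ β :=
        mul_le_mul_of_nonneg_right (le_abs_self C) (rpow_pos_of_pos (jbracket_pos x) β).le
      _ ≤ |C| := mul_le_of_le_one_right (abs_nonneg C) hw
  have hcube : ‖ξ - z‖ ≤ √d := by
    simpa using EuclideanSpace.norm_le_sqrt_card_mul (x := ξ - z) zero_le_one
      fun i => by simpa using hξz i
  exact (norm_sub_le_norm_sub_add_norm_sub _ ξ _).trans (add_le_add hball hcube)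

lemma jbracket_rpow_one_add_le {β R : ℝ} (hβ : β ≤ 0) {x z : EuclideanSpace ℝ (Fin d)}
    (h : ‖jbracket x ^ β • x - z‖ ≤ R) : jbracket x ^ (1 + β) ≤ (2 + R) * jbracket z := by
  have hw : 0 < jbracket x ^ β := rpow_pos_of_pos (jbracket_pos x) β
  have hw1 : jbracket x ^ β ≤ 1 := rpow_le_one_of_one_le_of_nonpos (one_le_jbracket x) hβ
  have hR : 0 ≤ R := (norm_nonneg _).trans h
  have hnorm : jbracket x ^ β * ‖x‖ ≤ ‖z‖ + R := by
    have := norm_sub_norm_le (jbracket x ^ β • x) z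
    rw [norm_smul, norm_of_nonneg hw.le] at this
    linarith
  calc jbracket x ^ (1 + β) = jbracket x ^ β * jbracket x := by
        rw [rpow_add (jbracket_pos x), rpow_one, mul_comm]
    _ ≤ jbracket x ^ β * (1 + ‖x‖) :=
        mul_le_mul_of_nonneg_left (jbracket_le_one_add_norm x) hw.le
    _ ≤ 1 + ‖z‖ + R := by linarith
    _ ≤ (2 + R) * jbracket z := by
        have hz := one_le_jbracket z
        nlinarith [norm_le_jbracket z, mul_nonneg hR (sub_nonneg.2 hz)]

lemma rpow_le_jbracket_rpow {α R : ℝ} (hα : α < 0) {x z : EuclideanSpace ℝ (Fin d)}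
    (h : ‖jbracket x ^ (α / (1 - α)) • x - z‖ ≤ R) :
    ((2 + R) * jbracket z) ^ α ≤ jbracket x ^ (α / (1 - α)) := by
  have h1α : 1 - α ≠ 0 := by linarith
  calc ((2 + R) * jbracket z) ^ α ≤ (jbracket x ^ (1 + α / (1 - α))) ^ α :=
        rpow_le_rpow_of_nonpos (rpow_pos_of_pos (jbracket_pos x) _)
          (jbracket_rpow_one_add_le (div_nonpos_of_nonpos_of_nonneg hα.le (by linarith)) h) hα.le
    _ = jbracket x ^ (α / (1 - α)) := by
        rw [← rpow_mul (jbracket_pos x).le]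
        congr 1
        field_simp
        ring

lemma norm_sub_le_of_norm_center_sub_le {α R : ℝ} (hα : α < 0)
    {x y z : EuclideanSpace ℝ (Fin d)}
    (hx : ‖jbracket x ^ (α / (1 - α)) • x - z‖ ≤ R)
    (hy : ‖jbracket y ^ (α / (1 - α)) • y - z‖ ≤ R) :
    ‖x - y‖ ≤ 2 * (1 - α) * R * ((2 + R) * jbracket z) ^ (-α) := by
  wlog hxy : ‖y‖ ≤ ‖x‖ generalizing x y
  · rw [norm_sub_rev]; exact this hy hx (le_of_not_ge hxy)
  set β := α / (1 - α)
  have h1α : 0 < 1 - α := by linarith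
  have hβ₁ : -1 ≤ β := by rw [le_div_iff₀ h1α]; linarith
  have hβ₀ : β ≤ 0 := div_nonpos_of_nonpos_of_nonneg hα.le h1α.le
  have hβα : (1 + β) * (1 - α) = 1 := by simp only [β]; field_simp; ring
  have hR : 0 ≤ R := (norm_nonneg _).trans hx
  have hbase : 0 < (2 + R) * jbracket z := mul_pos (by linarith) (jbracket_pos z)
  set w := ((2 + R) * jbracket z) ^ α
  have hw : 0 < w := rpow_pos_of_pos hbase α
  have hcenters : ‖jbracket x ^ β • x - jbracket y ^ β • y‖ ≤ 2 * R := by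
    have := norm_sub_le_norm_sub_add_norm_sub (jbracket x ^ β • x) z (jbracket y ^ β • y)
    rw [norm_sub_rev z] at this
    linarith
  have hspread : (1 + β) * w * ‖x - y‖ ≤ 2 * R := by
    have := one_add_mul_rpow_mul_norm_sub_le hβ₁ hβ₀ hxy
    rw [← jbracket_rpow, ← jbracket_rpow] at this
    calc (1 + β) * w * ‖x - y‖ ≤ (1 + β) * jbracket x ^ β * ‖x - y‖ := by
          gcongr
          · linarith
          · exact rpow_le_jbracket_rpow hα hx
      _ ≤ 2 * R := this.trans hcenters
  rw [rpow_neg hbase.le, ← div_eq_mul_inv, le_div_iff₀ hw]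
  calc ‖x - y‖ * w = (1 - α) * ((1 + β) * w * ‖x - y‖) := by
        linear_combination (-(w * ‖x - y‖)) * hβα
    _ ≤ (1 - α) * (2 * R) := mul_le_mul_of_nonneg_left hspread h1α.le
    _ = 2 * (1 - α) * R := by ring

theorem stmt17_general (d : ℕ) (α : ℝ) (hα : α < 0) (C : ℝ)
    (η : (Fin d → ℤ) → EuclideanSpace ℝ (Fin d) → ℂ)
    (θ : (Fin d → ℤ) → EuclideanSpace ℝ (Fin d) → ℂ)
    (hηsupp : ∀ k, Function.support (η k) ⊆
      Metric.ball ((jbracket (latt k) ^ (α / (1 - α))) • latt k)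
        (C * jbracket (latt k) ^ (α / (1 - α))))
    (hθsupp : ∀ ℓ, Function.support (θ ℓ) ⊆ {ξ | ∀ i, |ξ i - (ℓ i : ℝ)| ≤ 1}) :
    ∃ Cd > 0, ∀ ℓ : Fin d → ℤ,
      {k : Fin d → ℤ |
          (Function.support (η k) ∩ Function.support (θ ℓ)).Nonempty}.Finite ∧
        ({k : Fin d → ℤ |
            (Function.support (η k) ∩ Function.support (θ ℓ)).Nonempty}.ncard : ℝ)
          ≤ Cd * jbracket (latt ℓ) ^ (-(α * d)) := by
  have h1α : 0 ≤ 1 - α := by linarith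
  set R := |C| + √d
  set K := 2 * (1 - α) * R * (2 + R) ^ (-α)
  refine ⟨(2 * K + 1) ^ d, by positivity, fun ℓ => ?_⟩
  set L := jbracket (latt ℓ)
  have hL : 1 ≤ L ^ (-α) := one_le_rpow (one_le_jbracket _) (by linarith)
  set S := {k : Fin d → ℤ | (Function.support (η k) ∩ Function.support (θ ℓ)).Nonempty}
  have hcenter : ∀ k ∈ S, ‖jbracket (latt k) ^ (α / (1 - α)) • latt k - latt ℓ‖ ≤ R := by
    rintro k ⟨ξ, hξk, hξℓ⟩
    exact norm_center_sub_le (div_nonpos_of_nonpos_of_nonneg hα.le h1α) (hηsupp k hξk)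
      (hθsupp ℓ hξℓ)
  have hspread : ∀ k ∈ S, ∀ k' ∈ S, ∀ i, |(k i : ℝ) - k' i| ≤ K * L ^ (-α) :=
    fun k hk k' hk' i => (abs_sub_le_norm_latt_sub k k' i).trans <|
      (norm_sub_le_of_norm_center_sub_le hα (hcenter k hk) (hcenter k' hk')).trans_eq <| by
        rw [mul_rpow (by positivity) (jbracket_pos _).le]; ring
  obtain ⟨hfin, hcard⟩ := finite_and_ncard_le_of_abs_sub_le (by positivity) hspread
  refine ⟨hfin, hcard.trans ?_⟩
  calc (2 * (K * L ^ (-α)) + 1) ^ Fintype.card (Fin d) ≤ ((2 * K + 1) * L ^ (-α)) ^ d := by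
        rw [Fintype.card_fin]; gcongr; nlinarith
    _ = (2 * K + 1) ^ d * L ^ (-(α * d)) := by
        rw [mul_pow, ← rpow_mul_natCast (jbracket_pos _).le, neg_mul]

/-- Counting bound: for `α < 0`, a unit cube at frequency `ℓ` meets at most
`≲ ⟨ℓ⟩^{−αd}` of the `α`-decomposition balls `B(⟨k⟩^{α/(1−α)}k, C⟨k⟩^{α/(1−α)})`. -/
theorem stmt17 (d : ℕ) (hd : 1 ≤ d) (α : ℝ) (hα : α < 0) (C : ℝ) (hC : 0 < C)
    (η : (Fin d → ℤ) → EuclideanSpace ℝ (Fin d) → ℂ)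
    (θ : (Fin d → ℤ) → EuclideanSpace ℝ (Fin d) → ℂ)
    (hηsupp : ∀ k, Function.support (η k) ⊆
      Metric.ball ((jbracket (latt k) ^ (α / (1 - α))) • latt k)
        (C * jbracket (latt k) ^ (α / (1 - α))))
    (hθsupp : ∀ ℓ, Function.support (θ ℓ) ⊆ {ξ | ∀ i, |ξ i - (ℓ i : ℝ)| ≤ 1}) :
    ∃ Cd > 0, ∀ ℓ : Fin d → ℤ,
      {k : Fin d → ℤ |
          (Function.support (η k) ∩ Function.support (θ ℓ)).Nonempty}.Finite ∧
        ({k : Fin d → ℤ |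
            (Function.support (η k) ∩ Function.support (θ ℓ)).Nonempty}.ncard : ℝ)
          ≤ Cd * jbracket (latt ℓ) ^ (-(α * d)) :=
  stmt17_general d α hα C η θ hηsupp hθsupp
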